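/- arXiv:2201.10017 — 5 statements merged into one kernel-verified Lean document; each statement's English description precedes it below -/
import Mathlib

section
/- Strongly convex gradient-step inequality: if f : ℝⁿ → ℝ is μ-strongly convex and differentiable, x, y ∈ ℝⁿ, α > 0, and x⁺ = x − α ∇f(x), then f(x) − f(y) ≤ (1/(2α))(|x − y|²) − (1/(2α))|x⁺ − y|² − (μ/2)|x − y|² + (α/2)|∇f(x)|². -/
open scoped RealInnerProductSpace

theorem stmt_5 (n : ℕ) (f : EuclideanSpace ℝ (Fin n) → ℝ) (μ : ℝ) (hμ : 0 < μ)
    (hdiff : Differentiable ℝ f)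
    (hsc : ∀ x y : EuclideanSpace ℝ (Fin n),
      f y ≥ f x + ⟪gradient f x, y - x⟫ + μ / 2 * ‖y - x‖ ^ 2)
    (x y xplus : EuclideanSpace ℝ (Fin n)) (α : ℝ) (hα : 0 < α)
    (hstep : xplus = x - α • gradient f x) :
    f x - f y ≤ (1 / (2 * α)) * ‖x - y‖ ^ 2 - (1 / (2 * α)) * ‖xplus - y‖ ^ 2
      - (μ / 2) * ‖x - y‖ ^ 2 + (α / 2) * ‖gradient f x‖ ^ 2 := by
  set g := gradient f x with hg
  have h1 := hsc x y
  have hxp : xplus - y = (x - y) - α • g := by rw [hstep]; abel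
  have hnorm : ‖xplus - y‖ ^ 2
      = ‖x - y‖ ^ 2 - 2 * (α * ⟪g, x - y⟫) + α ^ 2 * ‖g‖ ^ 2 := by
    rw [hxp, norm_sub_sq_real, norm_smul, real_inner_smul_right]
    rw [real_inner_comm]
    simp [abs_of_pos hα]
    ring
  have hsym : ⟪g, y - x⟫ = - ⟪g, x - y⟫ := by
    rw [← inner_neg_right]; congr 1; abel
  have hnn : ‖y - x‖ = ‖x - y‖ := norm_sub_rev y x
  rw [hnn, hsym] at h1
  have hα' : (2 * α) ≠ 0 := by positivity
  rw [hnorm]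
  have h2 : (1 / (2 * α)) * (‖x - y‖ ^ 2 - 2 * (α * ⟪g, x - y⟫) + α ^ 2 * ‖g‖ ^ 2)
      = (1 / (2 * α)) * ‖x - y‖ ^ 2 - ⟪g, x - y⟫ + (α / 2) * ‖g‖ ^ 2 := by
    field_simp
  linarith [h1, h2]
end

section
/- Logarithmic static regret for strongly convex costs: let f_t : ℝⁿ → ℝ (t = 1,…,T) be differentiable, μ-strongly convex, with |∇f_t(x_t)| ≤ G along the iterates. If x_{t+1} = x_t − (1/(μt)) ∇f_t(x_t) and x* minimizes ∑_{t=1}^T f_t, then ∑_{t=1}^T (f_t(x_t) − f_t(x*)) ≤ (G²/(2μ))(1 + log T). -/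
open scoped RealInnerProductSpace
open Finset

/-!
Write `a t = ‖x t - x*‖²`. Strong convexity at `x t`, combined with the expansion of
`‖x (t+1) - x*‖²` along the step of size `1/(μ t)`, bounds the `t`-th regret by
`(μ/2) (t (a t - a (t+1)) - a t) + G²/(2 μ t)`. The first terms telescope to `-(μ/2) T a (T+1) ≤ 0`
because the step size is exactly `1/(μ t)`, and the second ones sum to `G²/(2μ)` times the
harmonic number `H_T ≤ 1 + log T`.
-/

section GradientStep

variable {E : Type*} [NormedAddCommGroup E] [InnerProductSpace ℝ E]

lemma norm_sub_smul_sub_sq (x z g : E) (η : ℝ) :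
    ‖x - η • g - z‖ ^ 2 = ‖x - z‖ ^ 2 - 2 * η * ⟪x - z, g⟫ + η ^ 2 * ‖g‖ ^ 2 := by
  rw [show x - η • g - z = (x - z) - η • g by abel, norm_sub_sq_real, real_inner_smul_right,
    norm_smul, mul_pow, Real.norm_eq_abs, sq_abs]
  ring

lemma sub_le_of_strongly_convex_gradient_step {f : E → ℝ} {g x z : E} {μ t : ℝ}
    (hμ : 0 < μ) (ht : 0 < t)
    (hsc : f x + ⟪g, z - x⟫ + μ / 2 * ‖z - x‖ ^ 2 ≤ f z) :
    f x - f z ≤ μ / 2 * (t * (‖x - z‖ ^ 2 - ‖x - (1 / (μ * t)) • g - z‖ ^ 2) - ‖x - z‖ ^ 2)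
      + ‖g‖ ^ 2 / (2 * μ * t) := by
  have h_inner : ⟪g, z - x⟫ = -⟪x - z, g⟫ := by
    rw [real_inner_comm, ← inner_neg_left, neg_sub]
  rw [h_inner, norm_sub_rev z x] at hsc
  have h_rhs : μ / 2 * (t * (‖x - z‖ ^ 2 - ‖x - (1 / (μ * t)) • g - z‖ ^ 2) - ‖x - z‖ ^ 2)
      + ‖g‖ ^ 2 / (2 * μ * t) = ⟪x - z, g⟫ - μ / 2 * ‖x - z‖ ^ 2 := by
    rw [norm_sub_smul_sub_sq]
    field_simp
    ring
  linarith

end GradientStep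

lemma sum_Icc_mul_sub_sub_eq (a : ℕ → ℝ) (T : ℕ) :
    ∑ t ∈ Icc 1 T, ((t : ℝ) * (a t - a (t + 1)) - a t) = -(T * a (T + 1)) := by
  induction T with
  | zero => simp
  | succ T ih =>
    rw [sum_Icc_succ_top (Nat.le_add_left 1 T), ih]
    push_cast
    ring

lemma sum_Icc_one_div_le_one_add_log (T : ℕ) :
    ∑ t ∈ Icc 1 T, (1 / (t : ℝ)) ≤ 1 + Real.log T := by
  have h := harmonic_le_one_add_log T
  rw [harmonic_eq_sum_Icc] at h
  push_cast at h
  simpa only [one_div] using h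

theorem stmt_6_general (n : ℕ) (T : ℕ)
    (f : ℕ → EuclideanSpace ℝ (Fin n) → ℝ) (μ G : ℝ) (hμ : 0 < μ)
    (x : ℕ → EuclideanSpace ℝ (Fin n)) (xstar : EuclideanSpace ℝ (Fin n))
    (hsc : ∀ t, ∀ u v : EuclideanSpace ℝ (Fin n),
      f t v ≥ f t u + ⟪gradient (f t) u, v - u⟫ + μ / 2 * ‖v - u‖ ^ 2)
    (hgrad : ∀ t ∈ Finset.Icc 1 T, ‖gradient (f t) (x t)‖ ≤ G)
    (hstep : ∀ t ∈ Finset.Icc 1 T,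
      x (t + 1) = x t - (1 / (μ * t)) • gradient (f t) (x t)) :
    ∑ t ∈ Finset.Icc 1 T, (f t (x t) - f t xstar) ≤
      G ^ 2 / (2 * μ) * (1 + Real.log T) := by
  set a : ℕ → ℝ := fun t => ‖x t - xstar‖ ^ 2
  have h_step : ∀ t ∈ Icc 1 T, f t (x t) - f t xstar ≤
      μ / 2 * ((t : ℝ) * (a t - a (t + 1)) - a t) + G ^ 2 / (2 * μ) * (1 / t) := by
    intro t ht
    have htpos : (0 : ℝ) < t := by exact_mod_cast (mem_Icc.mp ht).1
    have hG2 : ‖gradient (f t) (x t)‖ ^ 2 ≤ G ^ 2 :=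
      pow_le_pow_left₀ (norm_nonneg _) (hgrad t ht) 2
    have := sub_le_of_strongly_convex_gradient_step hμ htpos (hsc t (x t) xstar)
    rw [← hstep t ht] at this
    calc f t (x t) - f t xstar
        ≤ μ / 2 * ((t : ℝ) * (a t - a (t + 1)) - a t)
          + ‖gradient (f t) (x t)‖ ^ 2 / (2 * μ) * (1 / t) := by
          convert this using 2; field_simp
      _ ≤ _ := by gcongr
  calc ∑ t ∈ Icc 1 T, (f t (x t) - f t xstar)
      ≤ μ / 2 * ∑ t ∈ Icc 1 T, ((t : ℝ) * (a t - a (t + 1)) - a t)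
        + G ^ 2 / (2 * μ) * ∑ t ∈ Icc 1 T, (1 / (t : ℝ)) := by
        rw [mul_sum, mul_sum, ← sum_add_distrib]
        exact sum_le_sum h_step
    _ ≤ μ / 2 * 0 + G ^ 2 / (2 * μ) * (1 + Real.log T) := by
        rw [sum_Icc_mul_sub_sub_eq]
        gcongr
        · exact neg_nonpos.mpr (by positivity)
        · exact sum_Icc_one_div_le_one_add_log T
    _ = G ^ 2 / (2 * μ) * (1 + Real.log T) := by ring

theorem stmt_6 (n : ℕ) (T : ℕ) (hT : 1 ≤ T)
    (f : ℕ → EuclideanSpace ℝ (Fin n) → ℝ) (μ G : ℝ) (hμ : 0 < μ) (hG : 0 < G)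
    (x : ℕ → EuclideanSpace ℝ (Fin n)) (xstar : EuclideanSpace ℝ (Fin n))
    (hdiff : ∀ t, Differentiable ℝ (f t))
    (hsc : ∀ t, ∀ u v : EuclideanSpace ℝ (Fin n),
      f t v ≥ f t u + ⟪gradient (f t) u, v - u⟫ + μ / 2 * ‖v - u‖ ^ 2)
    (hgrad : ∀ t ∈ Finset.Icc 1 T, ‖gradient (f t) (x t)‖ ≤ G)
    (hstep : ∀ t ∈ Finset.Icc 1 T,
      x (t + 1) = x t - (1 / (μ * t)) • gradient (f t) (x t))
    (hmin : ∀ y : EuclideanSpace ℝ (Fin n),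
      ∑ t ∈ Finset.Icc 1 T, f t xstar ≤ ∑ t ∈ Finset.Icc 1 T, f t y) :
    ∑ t ∈ Finset.Icc 1 T, (f t (x t) - f t xstar) ≤
      G ^ 2 / (2 * μ) * (1 + Real.log T) :=
  stmt_6_general n T f μ G hμ x xstar hsc hgrad hstep
end

section
/- Dynamic comparator telescoping bound: let (x_t) and (x_t*) be sequences in ℝⁿ with |x_t| ≤ R and |x_t − x_t*| ≤ R for all t, and let C_T = ∑_{t=2}^{T}|x_t* − x_{t−1}*|. Then ∑_{t=1}^{T}(|x_t − x_t*|² − |x_{t+1} − x_t*|²) ≤ 5R² + 2R C_T. -/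
theorem stmt_8 (n : ℕ) (T : ℕ) (hT : 1 ≤ T) (R : ℝ) (hR : 0 < R)
    (x xs : ℕ → EuclideanSpace ℝ (Fin n))
    (hx : ∀ t, ‖x t‖ ≤ R)
    (hxs : ∀ t, ‖x t - xs t‖ ≤ R) :
    ∑ t ∈ Finset.Icc 1 T, (‖x t - xs t‖ ^ 2 - ‖x (t + 1) - xs t‖ ^ 2) ≤
      5 * R ^ 2 + 2 * R * ∑ t ∈ Finset.Icc 2 T, ‖xs t - xs (t - 1)‖ := by
  -- key lemma: ‖x (t+1) - xs t‖^2 ≥ ‖x (t+1) - xs (t+1)‖^2 - 2R‖xs (t+1) - xs t‖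
  have key : ∀ t : ℕ, ‖x (t + 1) - xs (t + 1)‖ ^ 2 - 2 * R * ‖xs (t + 1) - xs t‖
      ≤ ‖x (t + 1) - xs t‖ ^ 2 := by
    intro t
    set u := x (t + 1) - xs (t + 1) with hu
    set v := xs (t + 1) - xs t with hv
    have huv : x (t + 1) - xs t = u + v := by rw [hu, hv]; abel
    rw [huv]
    have h1 : ‖u‖ - ‖v‖ ≤ ‖u + v‖ := by
      have h := norm_sub_le (u + v) v
      have he : u + v - v = u := by abel
      rw [he] at h; linarith
    have h6 : ‖v‖ ≤ ‖u + v‖ + ‖u‖ := by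
      have h := norm_sub_le (u + v) u
      have he : u + v - u = v := by abel
      rw [he] at h; linarith
    have h2 : (0:ℝ) ≤ ‖u + v‖ := norm_nonneg _
    have h3 : ‖u‖ ≤ R := hxs (t + 1)
    have h4 : (0:ℝ) ≤ ‖u‖ := norm_nonneg _
    have h5 : (0:ℝ) ≤ ‖v‖ := norm_nonneg _
    nlinarith [mul_nonneg (by linarith : (0:ℝ) ≤ ‖u + v‖ - ‖u‖ + ‖v‖) (by linarith : (0:ℝ) ≤ ‖u + v‖ + ‖u‖ - ‖v‖), mul_nonneg h5 (sub_nonneg.2 h3), sq_nonneg ‖v‖]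
  -- strengthened invariant by induction
  have main : ∀ S : ℕ, 1 ≤ S →
      ∑ t ∈ Finset.Icc 1 S, (‖x t - xs t‖ ^ 2 - ‖x (t + 1) - xs t‖ ^ 2) ≤
        ‖x 1 - xs 1‖ ^ 2 - ‖x (S + 1) - xs S‖ ^ 2 +
          2 * R * ∑ t ∈ Finset.Icc 2 S, ‖xs t - xs (t - 1)‖ := by
    intro S hS
    induction S with
    | zero => omega
    | succ S ih =>
      rcases Nat.eq_or_lt_of_le hS with h1 | h1
      · simp [← h1]
      · have hS1 : 1 ≤ S := by omega
        have hih := ih hS1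
        rw [Finset.sum_Icc_succ_top (by omega : 1 ≤ S + 1),
            Finset.sum_Icc_succ_top (by omega : 2 ≤ S + 1)]
        have hk := key S
        have : (S + 1 - 1 : ℕ) = S := by omega
        rw [this]
        linarith
  have h := main T hT
  have ha1 : ‖x 1 - xs 1‖ ^ 2 ≤ R ^ 2 := by
    have := hxs 1
    nlinarith [norm_nonneg (x 1 - xs 1)]
  have hb : (0:ℝ) ≤ ‖x (T + 1) - xs T‖ ^ 2 := sq_nonneg _
  nlinarith [hR]
end

section
/- If 0 < α ≤ 2/(P(μ+L)) with P ≥ 1, 0 < μ ≤ L, then setting L̃ = 2/(Pα) − μ one has L̃ ≥ L, and for any v, d ∈ ℝⁿ satisfying ⟨v, d⟩ ≥ (μL̃/(μ+L̃))|d|² + (1/(μ+L̃))|v|², the inequality |d|² − (2α/P)⟨v, d⟩ + (α²/P²)|v|² ≤ (1 − 2αμ/P + α²μ²)|d|² holds provided α² − (2α/P)(1/(μ+L̃)) ≤ 0. -/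
open scoped RealInnerProductSpace

theorem stmt_12 (n : ℕ) (P : ℕ) (hP : 1 ≤ P) (μ L α : ℝ)
    (hμ : 0 < μ) (hμL : μ ≤ L) (hα : 0 < α) (hα2 : α ≤ 2 / (P * (μ + L))) :
    L ≤ 2 / (P * α) - μ ∧
    ∀ v d : EuclideanSpace ℝ (Fin n),
      ⟪v, d⟫ ≥ (μ * (2 / (P * α) - μ) / (μ + (2 / (P * α) - μ))) * ‖d‖ ^ 2
          + (1 / (μ + (2 / (P * α) - μ))) * ‖v‖ ^ 2 →
      α ^ 2 - (2 * α / P) * (1 / (μ + (2 / (P * α) - μ))) ≤ 0 →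
      ‖d‖ ^ 2 - (2 * α / P) * ⟪v, d⟫ + (α ^ 2 / (P : ℝ) ^ 2) * ‖v‖ ^ 2 ≤
        (1 - 2 * α * μ / P + α ^ 2 * μ ^ 2) * ‖d‖ ^ 2 := by
  have hP' : (0:ℝ) < P := by exact_mod_cast Nat.lt_of_lt_of_le Nat.zero_lt_one hP
  have hP1 : (1:ℝ) ≤ P := by exact_mod_cast hP
  have hPα : (0:ℝ) < P * α := by positivity
  have hμL0 : 0 < μ + L := by linarith
  have hden : 0 < (P:ℝ) * (μ + L) := by positivity
  have hkey : α * ((P:ℝ) * (μ + L)) ≤ 2 := (le_div_iff₀ hden).mp hα2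
  have hfirst : L ≤ 2 / (P * α) - μ := by
    rw [le_sub_iff_add_le, le_div_iff₀ hPα]
    nlinarith
  refine ⟨hfirst, fun v d hv hside => ?_⟩
  set a := ⟪v, d⟫ with ha
  have hsum : μ + (2 / (↑P * α) - μ) = 2 / (↑P * α) := by ring
  have hinv : 1 / (2 / ((P:ℝ) * α)) = (P:ℝ) * α / 2 := by field_simp
  rw [hsum, hinv] at hv
  have hd : 0 ≤ ‖d‖ ^ 2 := by positivity
  have hvn : 0 ≤ ‖v‖ ^ 2 := by positivity
  have hT : μ * (2 / (↑P * α) - μ) / (2 / (↑P * α)) = μ * (2 / (↑P * α) - μ) * ((P:ℝ) * α / 2) := by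
    rw [div_eq_mul_inv, ← one_div, hinv]
  rw [hT] at hv
  have hcoef : 0 < 2 * α / P := by positivity
  have hmul := mul_le_mul_of_nonneg_left hv.le (le_of_lt hcoef)
  have hPne : (P:ℝ) ≠ 0 := ne_of_gt hP'
  have heq : 2 * α / ↑P * (μ * (2 / (↑P * α) - μ) * ((P:ℝ) * α / 2) * ‖d‖ ^ 2
      + (P:ℝ) * α / 2 * ‖v‖ ^ 2)
      = (2 * α * μ / ↑P - α ^ 2 * μ ^ 2) * ‖d‖ ^ 2 + α ^ 2 * ‖v‖ ^ 2 := by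
    field_simp
  rw [heq] at hmul
  have hyco : α ^ 2 / (P:ℝ) ^ 2 ≤ α ^ 2 := by
    have h2 : (1:ℝ) ≤ (P:ℝ) ^ 2 := one_le_pow₀ hP1
    rw [div_le_iff₀ (by positivity)]
    nlinarith [sq_nonneg α, h2]
  have hyv := mul_le_mul_of_nonneg_right hyco hvn
  linarith
end

section
/- Gauss–Southwell descent: under the block descent setting, if block i is chosen to maximize |∇_{(i)} f(x)| over the P blocks, then f(x) − f(x⁺) ≥ (1/P)(α − α²L_max/2)|∇f(x)|², where x⁺ = x − α H_i ∇_{(i)} f(x) and 0 < α < 2/L_max. -/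
/-- Projection of a vector onto the coordinates in a block `S`
(all other coordinates are set to zero). -/
def blockProj {n : ℕ} (S : Finset (Fin n)) (v : EuclideanSpace ℝ (Fin n)) :
    EuclideanSpace ℝ (Fin n) :=
  WithLp.toLp 2 (fun j => if j ∈ S then v j else 0)

/-!
The block Lipschitz bound gives the one-block descent lemma
`f (x + u) ≤ f x + ⟪∇_S f x, u⟫ + L ‖u‖² / 2` for `u` supported on the block `S`.
For the Gauss–Southwell step `u = -α ∇_{S_i} f x` it yields a decrease of
`(α - α² L / 2) ‖∇_{S_i} f x‖²`, and since the blocks cover all coordinates,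
the largest of the `P` block gradients carries at least a `1/P` share of `‖∇f x‖²`.
-/

open Finset RealInnerProductSpace

section Descent

variable {E : Type*} [NormedAddCommGroup E] [InnerProductSpace ℝ E] [CompleteSpace E]
  {f : E → ℝ}

theorem hasDerivAt_comp_add_smul (hf : Differentiable ℝ f) (x u : E) (t : ℝ) :
    HasDerivAt (fun s : ℝ => f (x + s • u)) ⟪gradient f (x + t • u), u⟫ t := by
  have hline : HasDerivAt (fun s : ℝ => x + s • u) u t := by
    simpa using ((hasDerivAt_id t).smul_const u).const_add x
  have hcomp := (hasGradientAt_iff_hasFDerivAt.mp (hf (x + t • u)).hasGradientAt).comp_hasDerivAt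
    t hline
  simp only [InnerProductSpace.toDual_apply_apply] at hcomp
  exact hcomp

theorem le_add_inner_gradient_add_of_inner_gradient_sub_le (hf : Differentiable ℝ f)
    {L : ℝ} {x u : E}
    (hgrad : ∀ t ∈ Set.Ioo (0 : ℝ) 1,
      ⟪gradient f (x + t • u) - gradient f x, u⟫ ≤ L * t * ‖u‖ ^ 2) :
    f (x + u) ≤ f x + ⟪gradient f x, u⟫ + L * ‖u‖ ^ 2 / 2 := by
  set ψ : ℝ → ℝ := fun t =>
    f (x + t • u) - t * ⟪gradient f x, u⟫ - L * ‖u‖ ^ 2 * t ^ 2 / 2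
  have hψ : ∀ t, HasDerivAt ψ
      (⟪gradient f (x + t • u) - gradient f x, u⟫ - L * t * ‖u‖ ^ 2) t := by
    intro t
    have hquad := ((hasDerivAt_pow 2 t).const_mul (L * ‖u‖ ^ 2)).div_const 2
    refine (((hasDerivAt_comp_add_smul hf x u t).sub
      ((hasDerivAt_id t).mul_const ⟪gradient f x, u⟫)).sub hquad).congr_deriv ?_
    rw [inner_sub_left]
    push_cast
    ring
  have hanti : AntitoneOn ψ (Set.Icc 0 1) := by
    refine antitoneOn_of_hasDerivWithinAt_nonpos (convex_Icc 0 1)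
      (fun t _ => (hψ t).continuousAt.continuousWithinAt)
      (fun t _ => (hψ t).hasDerivWithinAt) fun t ht => ?_
    rw [interior_Icc] at ht
    exact sub_nonpos.mpr (hgrad t ht)
  have hψ_one_le_zero := hanti (Set.left_mem_Icc.mpr zero_le_one)
    (Set.right_mem_Icc.mpr zero_le_one) zero_le_one
  simp only [ψ, zero_smul, add_zero, one_smul] at hψ_one_le_zero
  linarith

end Descent

section Blocks

variable {n : ℕ}

theorem inner_blockProj_left (S : Finset (Fin n)) (v : EuclideanSpace ℝ (Fin n))
    {u : EuclideanSpace ℝ (Fin n)} (hu : ∀ j, j ∉ S → u j = 0) :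
    ⟪blockProj S v, u⟫ = ⟪v, u⟫ := by
  simp only [PiLp.inner_apply, RCLike.inner_apply, conj_trivial, blockProj]
  refine Finset.sum_congr rfl fun j _ => ?_
  by_cases h : j ∈ S <;> simp [h, hu j]

theorem blockProj_sub (S : Finset (Fin n)) (v w : EuclideanSpace ℝ (Fin n)) :
    blockProj S (v - w) = blockProj S v - blockProj S w := by
  ext j
  by_cases h : j ∈ S <;> simp [blockProj, h]

theorem blockProj_apply_of_notMem {S : Finset (Fin n)} (v : EuclideanSpace ℝ (Fin n))
    {j : Fin n} (hj : j ∉ S) : blockProj S v j = 0 := by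
  simp [blockProj, hj]

theorem le_add_inner_blockProj_add {S : Finset (Fin n)} {f : EuclideanSpace ℝ (Fin n) → ℝ}
    (hf : Differentiable ℝ f) {L : ℝ} {x u : EuclideanSpace ℝ (Fin n)}
    (hlip : ∀ u' : EuclideanSpace ℝ (Fin n), (∀ j, j ∉ S → u' j = 0) →
      ‖blockProj S (gradient f (x + u')) - blockProj S (gradient f x)‖ ≤ L * ‖u'‖)
    (hu : ∀ j, j ∉ S → u j = 0) :
    f (x + u) ≤ f x + ⟪blockProj S (gradient f x), u⟫ + L * ‖u‖ ^ 2 / 2 := by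
  rw [inner_blockProj_left S _ hu]
  refine le_add_inner_gradient_add_of_inner_gradient_sub_le hf fun t ht => ?_
  have htu : ∀ j, j ∉ S → (t • u) j = 0 := fun j hj => by simp [hu j hj]
  calc ⟪gradient f (x + t • u) - gradient f x, u⟫
      = ⟪blockProj S (gradient f (x + t • u)) - blockProj S (gradient f x), u⟫ := by
        rw [← blockProj_sub, inner_blockProj_left S _ hu]
    _ ≤ ‖blockProj S (gradient f (x + t • u)) - blockProj S (gradient f x)‖ * ‖u‖ :=
        real_inner_le_norm _ _
    _ ≤ L * ‖t • u‖ * ‖u‖ := by gcongr; exact hlip _ htu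
    _ = L * t * ‖u‖ ^ 2 := by
        rw [norm_smul, Real.norm_of_nonneg ht.1.le]
        ring

theorem norm_sq_le_sum_norm_blockProj_sq {P : ℕ} (S : Fin P → Finset (Fin n))
    (hcover : ∀ j, ∃ i, j ∈ S i) (v : EuclideanSpace ℝ (Fin n)) :
    ‖v‖ ^ 2 ≤ ∑ i, ‖blockProj (S i) v‖ ^ 2 := by
  simp_rw [EuclideanSpace.real_norm_sq_eq]
  rw [Finset.sum_comm]
  refine Finset.sum_le_sum fun j _ => ?_
  obtain ⟨i, hi⟩ := hcover j
  calc v j ^ 2 = blockProj (S i) v j ^ 2 := by simp [blockProj, hi]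
    _ ≤ ∑ i', blockProj (S i') v j ^ 2 :=
        Finset.single_le_sum (fun i' _ => sq_nonneg (blockProj (S i') v j)) (mem_univ i)

theorem norm_sq_le_card_mul_norm_blockProj_sq {P : ℕ} (S : Fin P → Finset (Fin n))
    (hcover : ∀ j, ∃ i, j ∈ S i) (v : EuclideanSpace ℝ (Fin n)) {i : Fin P}
    (hmax : ∀ i', ‖blockProj (S i') v‖ ≤ ‖blockProj (S i) v‖) :
    ‖v‖ ^ 2 ≤ P * ‖blockProj (S i) v‖ ^ 2 := by
  calc ‖v‖ ^ 2 ≤ ∑ i', ‖blockProj (S i') v‖ ^ 2 :=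
        norm_sq_le_sum_norm_blockProj_sq S hcover v
    _ ≤ ∑ _i' : Fin P, ‖blockProj (S i) v‖ ^ 2 := by gcongr with i'; exact hmax i'
    _ = P * ‖blockProj (S i) v‖ ^ 2 := by simp

end Blocks

theorem stmt_16_general (n P : ℕ)
    (S : Fin P → Finset (Fin n))
    (hpart : ∀ j : Fin n, ∃! i : Fin P, j ∈ S i)
    (f : EuclideanSpace ℝ (Fin n) → ℝ) (hdiff : Differentiable ℝ f)
    (Lb : Fin P → ℝ) (Lmax : ℝ) (hLb : ∀ i, Lb i ≤ Lmax)
    (hblip : ∀ i : Fin P, ∀ x u : EuclideanSpace ℝ (Fin n),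
      (∀ j : Fin n, j ∉ S i → u j = 0) →
      ‖blockProj (S i) (gradient f (x + u)) - blockProj (S i) (gradient f x)‖
        ≤ Lb i * ‖u‖)
    (i : Fin P) (x xplus : EuclideanSpace ℝ (Fin n)) (α : ℝ)
    (hα : 0 < α) (hα2 : α < 2 / Lmax)
    (hGS : ∀ i' : Fin P,
      ‖blockProj (S i') (gradient f x)‖ ≤ ‖blockProj (S i) (gradient f x)‖)
    (hstep : xplus = x - α • blockProj (S i) (gradient f x)) :
    f x - f xplus ≥
      (1 / (P : ℝ)) * (α - α ^ 2 * Lmax / 2) * ‖gradient f x‖ ^ 2 := by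
  set g := blockProj (S i) (gradient f x)
  have hLmax : 0 < Lmax := by
    by_contra! h
    exact (hα.trans hα2).not_ge (div_nonpos_of_nonneg_of_nonpos zero_le_two h)
  have hdescent : f xplus ≤ f x + ⟪g, -(α • g)⟫ + Lmax * ‖-(α • g)‖ ^ 2 / 2 := by
    rw [hstep, sub_eq_add_neg]
    refine le_add_inner_blockProj_add hdiff (fun u hu => ?_) fun j hj => ?_
    · exact (hblip i x u hu).trans (by gcongr; exact hLb i)
    · simp [g, blockProj_apply_of_notMem _ hj]
  rw [inner_neg_right, real_inner_smul_right, real_inner_self_eq_norm_sq, norm_neg, norm_smul,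
    Real.norm_of_nonneg hα.le] at hdescent
  have hshare : 1 / (P : ℝ) * ‖gradient f x‖ ^ 2 ≤ ‖g‖ ^ 2 := by
    have hPpos : (0 : ℝ) < P := by exact_mod_cast i.pos
    rw [one_div_mul_eq_div, div_le_iff₀' hPpos]
    exact norm_sq_le_card_mul_norm_blockProj_sq S (fun j => (hpart j).exists) _ hGS
  have hcoef : 0 ≤ α - α ^ 2 * Lmax / 2 := by
    have := (lt_div_iff₀ hLmax).mp hα2
    nlinarith
  calc f x - f xplus ≥ (α - α ^ 2 * Lmax / 2) * ‖g‖ ^ 2 := by linarith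
    _ ≥ (α - α ^ 2 * Lmax / 2) * (1 / (P : ℝ) * ‖gradient f x‖ ^ 2) := by gcongr
    _ = _ := by ring

theorem stmt_16 (n P : ℕ) (hP : 1 ≤ P)
    (S : Fin P → Finset (Fin n))
    (hpart : ∀ j : Fin n, ∃! i : Fin P, j ∈ S i)
    (f : EuclideanSpace ℝ (Fin n) → ℝ) (hdiff : Differentiable ℝ f)
    (Lb : Fin P → ℝ) (Lmax : ℝ) (hLb : ∀ i, Lb i ≤ Lmax) (hLmax : 0 < Lmax)
    (hblip : ∀ i : Fin P, ∀ x u : EuclideanSpace ℝ (Fin n),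
      (∀ j : Fin n, j ∉ S i → u j = 0) →
      ‖blockProj (S i) (gradient f (x + u)) - blockProj (S i) (gradient f x)‖
        ≤ Lb i * ‖u‖)
    (i : Fin P) (x xplus : EuclideanSpace ℝ (Fin n)) (α : ℝ)
    (hα : 0 < α) (hα2 : α < 2 / Lmax)
    (hGS : ∀ i' : Fin P,
      ‖blockProj (S i') (gradient f x)‖ ≤ ‖blockProj (S i) (gradient f x)‖)
    (hstep : xplus = x - α • blockProj (S i) (gradient f x)) :
    f x - f xplus ≥
      (1 / (P : ℝ)) * (α - α ^ 2 * Lmax / 2) * ‖gradient f x‖ ^ 2 :=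
  stmt_16_general n P S hpart f hdiff Lb Lmax hLb hblip i x xplus α hα hα2 hGS hstep
end
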